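/- arXiv:1707.08421 — 4 statements merged into one kernel-verified Lean document; each statement's English description precedes it below -/
import Mathlib

section
/- Let s ≥ 1 be an integer and ϱ₁, …, ϱ_s ∈ ℝ. Let Φ be the s × s real companion matrix with (Φ)_{j,j+1} = 1 for j = 1, …, s−1, last row (ϱ₁, ϱ₂, …, ϱ_s), and all other entries zero, and let Γ = (1, 0, …, 0) be the 1 × s row vector. Let M be an s × s real matrix, Q an s × 1 real column vector, and T an invertible s × s real matrix satisfying the Sylvester equation TΦ − MT = QΓ; set Ψ = ΓT⁻¹. Let u : ℝ → ℝ be s-times differentiable and satisfy u^{(s)}(t) = ϱ₁ u(t) + ϱ₂ u'(t) + ⋯ + ϱ_s u^{(s−1)}(t) for all t ∈ ℝ, and define θ(t) = T · (u(t), u'(t), …, u^{(s−1)}(t))ᵀ. Then θ is differentiable with θ'(t) = (M + QΨ) θ(t) and Ψ θ(t) = u(t) for all t ∈ ℝ. -/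
/-!
The Sylvester equation says exactly that `T` conjugates the companion matrix into the internal
model: `(M + QΨ) T = T Φ`, because `QΨT = QΓ`. The jet `x = (u, u', …, u^{(s-1)})` of a solution
of the ODE satisfies `x' = Φ x` (the last row of `Φ` is the ODE itself) and `Γ x = u`; applying
`T` transports both identities to `θ = T x`.
-/

open Matrix

theorem HasDerivAt.matrix_mulVec {𝕜 : Type*} [NontriviallyNormedField 𝕜] [CompleteSpace 𝕜]
    {m n : Type*} [Fintype m] [Fintype n] [DecidableEq n] {f : 𝕜 → n → 𝕜} {f' : n → 𝕜} {x : 𝕜}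
    (A : Matrix m n 𝕜) (h : HasDerivAt f f' x) :
    HasDerivAt (fun y => A *ᵥ f y) (A *ᵥ f') x :=
  (LinearMap.toContinuousLinearMap (Matrix.mulVecLin A)).hasFDerivAt.comp_hasDerivAt x h

theorem hasDerivAt_iteratedDeriv_pi {𝕜 : Type*} [NontriviallyNormedField 𝕜] {s : ℕ}
    {u : 𝕜 → 𝕜} (hu : ContDiff 𝕜 s u) (t : 𝕜) :
    HasDerivAt (fun y (k : Fin s) => iteratedDeriv k u y)
      (fun k : Fin s => iteratedDeriv (k + 1) u t) t := by
  refine hasDerivAt_pi.mpr fun k => ?_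
  rw [iteratedDeriv_succ]
  exact ((hu.differentiable_iteratedDeriv k (mod_cast k.isLt)) t).hasDerivAt

def companion {R : Type*} [Zero R] [One R] {s : ℕ} (ϱ : Fin s → R) : Matrix (Fin s) (Fin s) R :=
  Matrix.of fun i j : Fin s =>
    if (i : ℕ) = s - 1 then ϱ j else if (j : ℕ) = (i : ℕ) + 1 then 1 else 0

theorem companion_mulVec {R : Type*} [Semiring R] {s : ℕ} (ϱ : Fin s → R) {f : ℕ → R}
    (hf : f s = ∑ k : Fin s, ϱ k * f k) :
    companion ϱ *ᵥ (fun k : Fin s => f k) = fun k : Fin s => f (k + 1) := by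
  funext i
  simp only [companion, mulVec, dotProduct, of_apply]
  by_cases hi : (i : ℕ) = s - 1
  · simp only [if_pos hi]
    rw [hi, Nat.sub_add_cancel (by omega), hf]
  · have hlt : (i : ℕ) + 1 < s := by omega
    simp only [if_neg hi, ite_mul, one_mul, zero_mul]
    rw [Fintype.sum_eq_single (⟨i + 1, hlt⟩ : Fin s) fun j hj => if_neg fun h => hj (Fin.ext h),
      if_pos rfl]

def outputRow {R : Type*} [Zero R] [One R] (s : ℕ) : Matrix (Fin 1) (Fin s) R :=
  Matrix.of fun (_ : Fin 1) (j : Fin s) => if (j : ℕ) = 0 then 1 else 0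

theorem outputRow_mulVec {R : Type*} [NonAssocSemiring R] {s : ℕ} (hs : 0 < s) (x : Fin s → R) :
    outputRow s *ᵥ x = fun _ => x ⟨0, hs⟩ := by
  funext i
  simp only [outputRow, mulVec, dotProduct, of_apply, ite_mul, one_mul, zero_mul]
  rw [Fintype.sum_eq_single (⟨0, hs⟩ : Fin s) fun j hj => if_neg fun h => hj (Fin.ext h),
    if_pos rfl]

theorem add_mul_mul_inv_mul_eq_of_sub_eq {R : Type*} [CommRing R] {n p : Type*} [Fintype n]
    [Fintype p] [DecidableEq n] {T Φ M : Matrix n n R} {Q : Matrix n p R} {Γ : Matrix p n R}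
    (hT : IsUnit T.det) (hSyl : T * Φ - M * T = Q * Γ) :
    (M + Q * (Γ * T⁻¹)) * T = T * Φ := by
  rw [add_mul, Matrix.mul_assoc, Matrix.mul_assoc, nonsing_inv_mul T hT, Matrix.mul_one, ← hSyl,
    add_sub_cancel]

/-- **Steady-state generator property (Remark 2.4).**
Let `Φ` be the `s × s` companion matrix with superdiagonal `1`s and last row
`(ϱ₁, …, ϱ_s)`, let `Γ = (1, 0, …, 0)` be a row vector, let `T` be an invertible solution
of the Sylvester equation `TΦ − MT = QΓ`, and set `Ψ = ΓT⁻¹`. If `u : ℝ → ℝ` is `s`-times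
differentiable and satisfies `u^{(s)} = ϱ₁ u + ϱ₂ u' + ⋯ + ϱ_s u^{(s−1)}`, then
`θ(t) = T ⬝ (u(t), u'(t), …, u^{(s−1)}(t))ᵀ` satisfies `θ' = (M + QΨ)θ` and `Ψθ = u`. -/
theorem steady_state_generator
    (s : ℕ) (hs : 1 ≤ s) (ϱ : Fin s → ℝ)
    (Φ : Matrix (Fin s) (Fin s) ℝ)
    (hΦ : Φ = Matrix.of fun i j : Fin s =>
      if (i : ℕ) = s - 1 then ϱ j else if (j : ℕ) = (i : ℕ) + 1 then 1 else 0)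
    (Γ : Matrix (Fin 1) (Fin s) ℝ)
    (hΓ : Γ = Matrix.of fun (_ : Fin 1) (j : Fin s) => if (j : ℕ) = 0 then (1 : ℝ) else 0)
    (M : Matrix (Fin s) (Fin s) ℝ) (Q : Matrix (Fin s) (Fin 1) ℝ)
    (T : Matrix (Fin s) (Fin s) ℝ) (hT : IsUnit T.det)
    (hSyl : T * Φ - M * T = Q * Γ)
    (Ψ : Matrix (Fin 1) (Fin s) ℝ) (hΨ : Ψ = Γ * T⁻¹)
    (u : ℝ → ℝ) (hu : ContDiff ℝ s u)
    (hode : ∀ t : ℝ, iteratedDeriv s u t = ∑ k : Fin s, ϱ k * iteratedDeriv (k : ℕ) u t)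
    (θ : ℝ → Fin s → ℝ)
    (hθ : θ = fun t => T.mulVec fun k : Fin s => iteratedDeriv (k : ℕ) u t) :
    (∀ t : ℝ, HasDerivAt θ ((M + Q * Ψ).mulVec (θ t)) t) ∧
      ∀ t : ℝ, Ψ.mulVec (θ t) 0 = u t := by
  have hΦ' : Φ = companion ϱ := hΦ
  have hΓ' : Γ = outputRow s := hΓ
  have hconj := add_mul_mul_inv_mul_eq_of_sub_eq hT hSyl
  subst hΦ' hΓ' hΨ hθ
  refine ⟨fun t => ?_, fun t => ?_⟩
  · have hshift := companion_mulVec ϱ (f := fun k => iteratedDeriv k u t) (hode t)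
    rw [mulVec_mulVec, hconj, ← mulVec_mulVec, hshift]
    exact (hasDerivAt_iteratedDeriv_pi hu t).matrix_mulVec T
  · rw [mulVec_mulVec, Matrix.mul_assoc, nonsing_inv_mul T hT, Matrix.mul_one,
      outputRow_mulVec hs, iteratedDeriv_zero]
end

section
/- Let n, m, p ≥ 1 be integers, let K ⊆ ℝᵖ be a compact set, and let f : ℝⁿ × ℝᵐ × K → ℝ be continuous with f(0, 0, μ) = 0 for all μ ∈ K. Then there exist continuous functions φ : ℝⁿ → [0,∞) and χ : ℝᵐ → [0,∞) with φ(0) = 0 and χ(0) = 0 such that |f(z, e, μ)| ≤ φ(z) + χ(e) for all z ∈ ℝⁿ, e ∈ ℝᵐ, and μ ∈ K. -/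
/-- **Splitting bound for a continuous function vanishing at the origin
(Lemma 7.8 of Huang's book; equations (tildegi1) and (barrho2) in Lemma 1).**
If `f : ℝⁿ × ℝᵐ × K → ℝ` is continuous on `ℝⁿ × ℝᵐ × K` with `K` compact and
`f(0, 0, μ) = 0` for all `μ ∈ K`, then there are continuous nonnegative functions
`φ : ℝⁿ → [0,∞)` and `χ : ℝᵐ → [0,∞)` vanishing at `0` with
`|f(z, e, μ)| ≤ φ(z) + χ(e)` for all `z`, `e`, and `μ ∈ K`. -/
theorem splitting_bound
    (n m p : ℕ) (hn : 1 ≤ n) (hm : 1 ≤ m) (hp : 1 ≤ p)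
    (K : Set (EuclideanSpace ℝ (Fin p))) (hK : IsCompact K)
    (f : EuclideanSpace ℝ (Fin n) → EuclideanSpace ℝ (Fin m) →
      EuclideanSpace ℝ (Fin p) → ℝ)
    (hf : ContinuousOn
      (fun q : EuclideanSpace ℝ (Fin n) × EuclideanSpace ℝ (Fin m) ×
        EuclideanSpace ℝ (Fin p) => f q.1 q.2.1 q.2.2)
      (Set.univ ×ˢ Set.univ ×ˢ K))
    (h0 : ∀ μ ∈ K, f 0 0 μ = 0) :
    ∃ (φ : EuclideanSpace ℝ (Fin n) → ℝ) (χ : EuclideanSpace ℝ (Fin m) → ℝ),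
      Continuous φ ∧ Continuous χ ∧ (∀ z, 0 ≤ φ z) ∧ (∀ e, 0 ≤ χ e) ∧
      φ 0 = 0 ∧ χ 0 = 0 ∧
      ∀ z e μ, μ ∈ K → |f z e μ| ≤ φ z + χ e := by
  classical
  rcases Set.eq_empty_or_nonempty K with hKe | ⟨μ0, hμ0⟩
  · refine ⟨fun _ => 0, fun _ => 0, continuous_const, continuous_const,
      fun _ => le_refl 0, fun _ => le_refl 0, rfl, rfl, ?_⟩
    intro z e μ hμ
    rw [hKe] at hμ
    exact absurd hμ (Set.notMem_empty μ)
  set C : Set (EuclideanSpace ℝ (Fin n) × EuclideanSpace ℝ (Fin m) ×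
      EuclideanSpace ℝ (Fin p)) :=
    Metric.closedBall 0 1 ×ˢ Metric.closedBall 0 1 ×ˢ K with hCdef
  have hCcomp : IsCompact C :=
    (isCompact_closedBall _ _).prod ((isCompact_closedBall _ _).prod hK)
  haveI : CompactSpace C := isCompact_iff_compactSpace.mp hCcomp
  set H : ℝ → C → ℝ :=
    fun r c => |f (r • c.val.1) (r • c.val.2.1) c.val.2.2| with hHdef
  have hψ : Continuous (fun q : ℝ × C =>
      ((q.1 • q.2.val.1, q.1 • q.2.val.2.1, q.2.val.2.2) :
        EuclideanSpace ℝ (Fin n) ×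
        EuclideanSpace ℝ (Fin m) × EuclideanSpace ℝ (Fin p))) := by
    fun_prop
  have hmaps : ∀ q : ℝ × C,
      ((q.1 • q.2.val.1, q.1 • q.2.val.2.1, q.2.val.2.2) :
        EuclideanSpace ℝ (Fin n) ×
        EuclideanSpace ℝ (Fin m) × EuclideanSpace ℝ (Fin p)) ∈
        Set.univ ×ˢ Set.univ ×ˢ K := by
    rintro ⟨r, c⟩
    have hc := c.2
    simp only [hCdef, Set.mem_prod] at hc ⊢
    exact ⟨trivial, trivial, hc.2.2⟩
  have hH : Continuous (Function.uncurry H) := by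
    have h := (hf.comp_continuous hψ hmaps).abs
    exact h
  set g : ℝ → ℝ := fun r => sSup (H r '' Set.univ) with hgdef
  have hgcont : Continuous g := IsCompact.continuous_sSup isCompact_univ hH
  have hc0 : ((0, 0, μ0) : EuclideanSpace ℝ (Fin n) × EuclideanSpace ℝ (Fin m) ×
      EuclideanSpace ℝ (Fin p)) ∈ C := by
    simp only [hCdef, Set.mem_prod]
    exact ⟨Metric.mem_closedBall_self zero_le_one,
      Metric.mem_closedBall_self zero_le_one, hμ0⟩
  have hbdd : ∀ r : ℝ, BddAbove (H r '' Set.univ) := by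
    intro r
    have : Continuous (H r) := hH.comp (Continuous.prodMk_right r)
    exact (isCompact_univ.image this).bddAbove
  have hginS : ∀ r : ℝ, ∀ c : C, H r c ≤ g r := by
    intro r c
    exact le_csSup (hbdd r) ⟨c, Set.mem_univ c, rfl⟩
  have hgnonneg : ∀ r, 0 ≤ g r := by
    intro r
    exact le_trans (abs_nonneg _) (hginS r ⟨(0, 0, μ0), hc0⟩)
  have hg0 : g 0 = 0 := by
    refine le_antisymm ?_ (hgnonneg 0)
    refine csSup_le ⟨H 0 ⟨(0, 0, μ0), hc0⟩, ⟨_, Set.mem_univ _, rfl⟩⟩ ?_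
    rintro x ⟨c, -, rfl⟩
    have hc := c.2
    simp only [hCdef, Set.mem_prod] at hc
    simp only [hHdef, zero_smul, h0 _ hc.2.2, abs_zero, le_refl]
  refine ⟨fun z => g ‖z‖, fun e => g ‖e‖, hgcont.comp continuous_norm,
    hgcont.comp continuous_norm, fun z => hgnonneg _, fun e => hgnonneg _,
    by simpa using hg0, by simpa using hg0, ?_⟩
  intro z e μ hμ
  set r : ℝ := max ‖z‖ ‖e‖ with hrdef
  have hr0 : (0 : ℝ) ≤ r := le_trans (norm_nonneg z) (le_max_left _ _)
  have key : |f z e μ| ≤ g r := by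
    rcases eq_or_lt_of_le hr0 with h | hrpos
    · have hz : ‖z‖ = 0 := le_antisymm (h ▸ le_max_left _ _) (norm_nonneg z)
      have he : ‖e‖ = 0 := le_antisymm (h ▸ le_max_right _ _) (norm_nonneg e)
      rw [norm_eq_zero] at hz he
      subst hz; subst he
      rw [h0 _ hμ, abs_zero]
      exact hgnonneg r
    · have hrne : r ≠ 0 := ne_of_gt hrpos
      have hzmem : r⁻¹ • z ∈ Metric.closedBall (0 : EuclideanSpace ℝ (Fin n)) 1 := by
        rw [mem_closedBall_zero_iff, norm_smul, norm_inv, Real.norm_eq_abs,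
          abs_of_pos hrpos]
        rw [inv_mul_le_iff₀ hrpos, mul_one]
        exact le_max_left _ _
      have hemem : r⁻¹ • e ∈ Metric.closedBall (0 : EuclideanSpace ℝ (Fin m)) 1 := by
        rw [mem_closedBall_zero_iff, norm_smul, norm_inv, Real.norm_eq_abs,
          abs_of_pos hrpos]
        rw [inv_mul_le_iff₀ hrpos, mul_one]
        exact le_max_right _ _
      have hcmem : ((r⁻¹ • z, r⁻¹ • e, μ) : EuclideanSpace ℝ (Fin n) ×
          EuclideanSpace ℝ (Fin m) × EuclideanSpace ℝ (Fin p)) ∈ C := by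
        simp only [hCdef, Set.mem_prod]
        exact ⟨hzmem, hemem, hμ⟩
      have := hginS r ⟨(r⁻¹ • z, r⁻¹ • e, μ), hcmem⟩
      simp only [hHdef, smul_inv_smul₀ hrne] at this
      exact this
  have hsplit : g r ≤ g ‖z‖ + g ‖e‖ := by
    rcases max_choice ‖z‖ ‖e‖ with h | h
    · rw [hrdef, h]; exact le_add_of_nonneg_right (hgnonneg _)
    · rw [hrdef, h]; exact le_add_of_nonneg_left (hgnonneg _)
  exact key.trans hsplit
end

section
/- Let v₁, v₂ : ℝ → ℝ be differentiable functions satisfying v₁'(t) = v₂(t) and v₂'(t) = −v₁(t) for all t ∈ ℝ, and let r₁, r₂, r₃, r₄, r₅, r₆ ∈ ℝ. Define u : ℝ → ℝ by u(t) = r₁ v₁(t) + r₂ v₂(t) + r₃ v₁(t)³ + r₄ v₂(t)³ + r₅ v₁(t)² v₂(t) + r₆ v₁(t) v₂(t)². Then u is four times differentiable and u⁗(t) + 10 u″(t) + 9 u(t) = 0 for all t ∈ ℝ. -/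
/-!
Along the exosystem the pair `(v₁, v₂)` rotates with unit angular speed, so `v₁² + v₂²` is a
constant `ρ`, and `(v₁³ - 3v₁v₂², 3v₁²v₂ - v₂³)`, the real and imaginary parts of `(v₁ + i v₂)³`,
rotates with speed `3`. Every cubic form in `(v₁, v₂)` is `ρ` times a linear form plus a
combination of these two, so `u = p + q` with `p'' = -p` and `q'' = -9q`, and
`(D² + 1)(D² + 9) = D⁴ + 10D² + 9` annihilates `u`.
-/

section IteratedDeriv

variable {𝕜 F : Type*} [NontriviallyNormedField 𝕜] [NormedAddCommGroup F] [NormedSpace 𝕜 F]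

theorem iteratedDeriv_eq_of_hasDerivAt_succ {f : ℕ → 𝕜 → F}
    (hf : ∀ k t, HasDerivAt (f k) (f (k + 1) t) t) (k : ℕ) : iteratedDeriv k (f 0) = f k := by
  induction k with
  | zero => exact iteratedDeriv_zero
  | succ k ih => rw [iteratedDeriv_succ, ih]; exact funext fun t => (hf k t).deriv

end IteratedDeriv

section Oscillation

/-- The successive derivatives of a solution `f` of `f'' = -a f` with derivative `f'`. -/
def oscChain (a : ℝ) (f f' : ℝ → ℝ) : ℕ → ℝ → ℝ
  | 0 => f
  | 1 => f'
  | k + 2 => fun t => -(a * oscChain a f f' k t)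

variable {a b : ℝ} {p p' q q' : ℝ → ℝ}

theorem hasDerivAt_oscChain (hp : ∀ t, HasDerivAt p (p' t) t)
    (hp' : ∀ t, HasDerivAt p' (-(a * p t)) t) :
    ∀ k t, HasDerivAt (oscChain a p p' k) (oscChain a p p' (k + 1) t) t
  | 0 => hp
  | 1 => hp'
  | k + 2 => fun t => ((hasDerivAt_oscChain hp hp' k t).const_mul a).neg

theorem ode_of_add_oscillations (hp : ∀ t, HasDerivAt p (p' t) t)
    (hp' : ∀ t, HasDerivAt p' (-(a * p t)) t) (hq : ∀ t, HasDerivAt q (q' t) t)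
    (hq' : ∀ t, HasDerivAt q' (-(b * q t)) t) :
    (∀ k, Differentiable ℝ (iteratedDeriv k (p + q))) ∧
      ∀ t, iteratedDeriv 4 (p + q) t + (a + b) * iteratedDeriv 2 (p + q) t +
        a * b * (p + q) t = 0 := by
  set F : ℕ → ℝ → ℝ := fun k => oscChain a p p' k + oscChain b q q' k
  have hF : ∀ k t, HasDerivAt (F k) (F (k + 1) t) t := fun k t =>
    (hasDerivAt_oscChain hp hp' k t).add (hasDerivAt_oscChain hq hq' k t)
  have hiter : ∀ k, iteratedDeriv k (p + q) = F k := iteratedDeriv_eq_of_hasDerivAt_succ hF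
  refine ⟨fun k t => ?_, fun t => ?_⟩
  · rw [hiter]
    exact (hF k t).differentiableAt
  · simp only [hiter, F, oscChain, Pi.add_apply]
    ring

end Oscillation

section Rotation

/-- The exosystem `v̇ = S v`, `S = [[0, 1], [-1, 0]]`, run at angular speed `ω`. -/
def IsUniformRotation (ω : ℝ) (x y : ℝ → ℝ) : Prop :=
  ∀ t, HasDerivAt x (ω * y t) t ∧ HasDerivAt y (-(ω * x t)) t

namespace IsUniformRotation

variable {ω : ℝ} {x y : ℝ → ℝ}

theorem hasDerivAt_linear (h : IsUniformRotation ω x y) (c d t : ℝ) :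
    HasDerivAt (fun t => c * x t + d * y t) (-(ω * d) * x t + ω * c * y t) t := by
  refine (((h t).1.const_mul c).add ((h t).2.const_mul d)).congr_deriv ?_
  ring

theorem linear_oscillates (h : IsUniformRotation ω x y) (c d : ℝ) :
    (∀ t, HasDerivAt (fun t => c * x t + d * y t) (-(ω * d) * x t + ω * c * y t) t) ∧
      ∀ t, HasDerivAt (fun t => -(ω * d) * x t + ω * c * y t)
        (-(ω ^ 2 * (c * x t + d * y t))) t := by
  refine ⟨h.hasDerivAt_linear c d, fun t => ?_⟩
  refine (h.hasDerivAt_linear (-(ω * d)) (ω * c) t).congr_deriv ?_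
  ring

theorem sq_add_sq_eq (h : IsUniformRotation ω x y) (t : ℝ) :
    x t ^ 2 + y t ^ 2 = x 0 ^ 2 + y 0 ^ 2 := by
  have hderiv : ∀ t, HasDerivAt (fun t => x t ^ 2 + y t ^ 2) 0 t := fun t => by
    refine (((h t).1.fun_pow 2).add ((h t).2.fun_pow 2)).congr_deriv ?_
    ring
  exact is_const_of_deriv_eq_zero (fun t => (hderiv t).differentiableAt)
    (fun t => (hderiv t).deriv) t 0

/-- Cubing `x + i y` triples the angular speed. -/
theorem cube (h : IsUniformRotation ω x y) :
    IsUniformRotation (3 * ω) (fun t => x t ^ 3 - 3 * x t * y t ^ 2)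
      (fun t => 3 * x t ^ 2 * y t - y t ^ 3) := fun t => by
  have hx := (h t).1
  have hy := (h t).2
  constructor
  · refine ((hx.fun_pow 3).sub ((hx.const_mul 3).mul (hy.fun_pow 2))).congr_deriv ?_
    ring
  · refine (((hx.fun_pow 2).const_mul 3).mul hy |>.sub (hy.fun_pow 3)).congr_deriv ?_
    ring

end IsUniformRotation

end Rotation

/-- **The steady-state input of the Lorenz example satisfies `u⁗ + 10u″ + 9u = 0`
(equation (Ui3)).**
If `v₁' = v₂` and `v₂' = −v₁`, then
`u = r₁v₁ + r₂v₂ + r₃v₁³ + r₄v₂³ + r₅v₁²v₂ + r₆v₁v₂²` is four times differentiable and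
satisfies `u⁗(t) + 10u″(t) + 9u(t) = 0` for all `t`. -/
theorem lorenz_steady_state_ode
    (v₁ v₂ : ℝ → ℝ)
    (hv₁ : ∀ t, HasDerivAt v₁ (v₂ t) t)
    (hv₂ : ∀ t, HasDerivAt v₂ (-v₁ t) t)
    (r₁ r₂ r₃ r₄ r₅ r₆ : ℝ)
    (u : ℝ → ℝ)
    (hu : u = fun t => r₁ * v₁ t + r₂ * v₂ t + r₃ * v₁ t ^ 3 + r₄ * v₂ t ^ 3 +
      r₅ * v₁ t ^ 2 * v₂ t + r₆ * v₁ t * v₂ t ^ 2) :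
    (∀ k < 4, Differentiable ℝ (iteratedDeriv k u)) ∧
      ∀ t : ℝ, iteratedDeriv 4 u t + 10 * iteratedDeriv 2 u t + 9 * u t = 0 := by
  have hv : IsUniformRotation 1 v₁ v₂ := fun t => ⟨by simpa using hv₁ t, by simpa using hv₂ t⟩
  set ρ := v₁ 0 ^ 2 + v₂ 0 ^ 2
  obtain ⟨hp, hp'⟩ :=
    hv.linear_oscillates (r₁ + ρ * (3 * r₃ + r₆) / 4) (r₂ + ρ * (3 * r₄ + r₅) / 4)
  obtain ⟨hq, hq'⟩ := hv.cube.linear_oscillates ((r₃ - r₆) / 4) ((r₅ - r₄) / 4)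
  have hsplit : u = (fun t => (r₁ + ρ * (3 * r₃ + r₆) / 4) * v₁ t +
      (r₂ + ρ * (3 * r₄ + r₅) / 4) * v₂ t) + fun t =>
      (r₃ - r₆) / 4 * (v₁ t ^ 3 - 3 * v₁ t * v₂ t ^ 2) +
      (r₅ - r₄) / 4 * (3 * v₁ t ^ 2 * v₂ t - v₂ t ^ 3) := by
    subst hu
    funext t
    simp only [Pi.add_apply]
    linear_combination ((3 * r₃ + r₆) / 4 * v₁ t + (3 * r₄ + r₅) / 4 * v₂ t) * hv.sq_add_sq_eq t
  obtain ⟨hdiff, hode⟩ := ode_of_add_oscillations hp hp' hq hq'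
  rw [hsplit]
  exact ⟨fun k _ => hdiff k, fun t => by linear_combination hode t⟩
end

section
/- For all R_z > 0 and R_v > 0 there exist ħ > 0 and ℓ₁, ℓ₂, ℓ₃, ℓ₄, ℓ₅ > 0 such that for all c₁ ∈ [−7, −5], c₂ ∈ [−9, −7], all s, p ∈ ℝ with |s| ≤ R_z and |p| ≤ R_v, and all z₁, z₂, e ∈ ℝ: (ħ z₁ + ħ z₁³) · c₁ (z₁ − e) + z₂ · ( c₂ z₂ + (z₁ + s)(e + p) − s p ) ≤ −ℓ₁ z₁² − ℓ₂ z₁⁴ − ℓ₃ z₂² + ℓ₄ e² + ℓ₅ e⁴. -/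
set_option maxHeartbeats 1000000 in
/-- **ISS Lyapunov dissipation inequality for the Lorenz `z̄`-subsystem.**
For all `R_z > 0` and `R_v > 0` there exist `hbar > 0` and `ℓ₁, …, ℓ₅ > 0` such that for all
`c₁ ∈ [−7, −5]`, `c₂ ∈ [−9, −7]`, all `|s| ≤ R_z`, `|p| ≤ R_v`, and all `z₁, z₂, e ∈ ℝ`:
`(hbarz₁ + hbarz₁³)·c₁(z₁ − e) + z₂·(c₂z₂ + (z₁ + s)(e + p) − sp)
  ≤ −ℓ₁z₁² − ℓ₂z₁⁴ − ℓ₃z₂² + ℓ₄e² + ℓ₅e⁴`. -/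
theorem lorenz_iss_dissipation :
    ∀ Rz Rv : ℝ, 0 < Rz → 0 < Rv →
      ∃ hbar ℓ₁ ℓ₂ ℓ₃ ℓ₄ ℓ₅ : ℝ,
        0 < hbar ∧ 0 < ℓ₁ ∧ 0 < ℓ₂ ∧ 0 < ℓ₃ ∧ 0 < ℓ₄ ∧ 0 < ℓ₅ ∧
        ∀ c₁ ∈ Set.Icc (-7 : ℝ) (-5), ∀ c₂ ∈ Set.Icc (-9 : ℝ) (-7),
          ∀ s p : ℝ, |s| ≤ Rz → |p| ≤ Rv →
            ∀ z₁ z₂ e : ℝ,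
              (hbar * z₁ + hbar * z₁ ^ 3) * (c₁ * (z₁ - e)) +
                  z₂ * (c₂ * z₂ + (z₁ + s) * (e + p) - s * p) ≤
                -ℓ₁ * z₁ ^ 2 - ℓ₂ * z₁ ^ 4 - ℓ₃ * z₂ ^ 2 + ℓ₄ * e ^ 2 + ℓ₅ * e ^ 4 := by
  intro Rz Rv hRz hRv
  refine ⟨2 + Rv ^ 2, 1, 1, 5, 13 * (2 + Rv ^ 2) + Rz ^ 2 / 2, 5 * (2 + Rv ^ 2) + 1 / 4,
    by positivity, one_pos, one_pos, by norm_num, by positivity, by positivity, ?_⟩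
  intro c₁ hc₁ c₂ hc₂ s p hs hp z₁ z₂ e
  obtain ⟨hc₁l, hc₁u⟩ := hc₁
  obtain ⟨hc₂l, hc₂u⟩ := hc₂
  set H : ℝ := 2 + Rv ^ 2 with hH
  have hHpos : 0 < H := by positivity
  have hs2 : s ^ 2 ≤ Rz ^ 2 := by
    have := abs_nonneg s
    nlinarith [sq_abs s]
  have hp2 : p ^ 2 ≤ Rv ^ 2 := by
    have := abs_nonneg p
    nlinarith [sq_abs p]
  have hz1 : (0:ℝ) ≤ z₁ ^ 2 := sq_nonneg z₁
  have hz14 : (0:ℝ) ≤ z₁ ^ 4 := by positivity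
  have he2 : (0:ℝ) ≤ e ^ 2 := sq_nonneg e
  have he4 : (0:ℝ) ≤ e ^ 4 := by positivity
  have hRv2 : (0:ℝ) ≤ Rv ^ 2 := sq_nonneg Rv
  -- T1
  have h1 : c₁ * (z₁ ^ 2 + z₁ ^ 4) ≤ -5 * (z₁ ^ 2 + z₁ ^ 4) := by
    have ht : 0 ≤ z₁ ^ 2 + z₁ ^ 4 := by positivity
    exact mul_le_mul_of_nonneg_right hc₁u ht
  -- T2
  have h2 : -(c₁ * (z₁ * e)) ≤ z₁ ^ 2 + 49 / 4 * e ^ 2 := by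
    rcases le_or_gt 0 (z₁ * e) with h | h
    · nlinarith [sq_nonneg (z₁ - 7 / 2 * e)]
    · nlinarith [sq_nonneg z₁, sq_nonneg e]
  -- T3
  have h3 : -(c₁ * (z₁ ^ 3 * e)) ≤ 4 * z₁ ^ 4 + 5 * e ^ 4 := by
    rcases le_or_gt 0 (z₁ ^ 3 * e) with h | h
    · have key : 7 * (z₁ ^ 3 * e) ≤ 4 * z₁ ^ 4 + 5 * e ^ 4 := by
        nlinarith [sq_nonneg (z₁ ^ 2 - 7 / 4 * z₁ * e), sq_nonneg (4 / 7 * z₁ ^ 2 - 7 / 8 * e ^ 2)]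
      nlinarith
    · nlinarith [sq_nonneg (z₁ ^ 2), sq_nonneg (e ^ 2)]
  -- T4
  have h4 : c₂ * z₂ ^ 2 ≤ -7 * z₂ ^ 2 :=
    mul_le_mul_of_nonneg_right hc₂u (sq_nonneg z₂)
  -- T5
  have h5 : z₂ * (z₁ * e) ≤ 1 / 2 * z₂ ^ 2 + 1 / 4 * z₁ ^ 4 + 1 / 4 * e ^ 4 := by
    nlinarith [sq_nonneg (z₂ - z₁ * e), sq_nonneg (z₁ ^ 2 - e ^ 2)]
  -- T6
  have h6 : z₂ * (z₁ * p) ≤ 1 / 2 * z₂ ^ 2 + Rv ^ 2 / 2 * z₁ ^ 2 := by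
    nlinarith [sq_nonneg (z₂ - z₁ * p), mul_nonneg (sq_nonneg z₁) (sub_nonneg.mpr hp2)]
  -- T7
  have h7 : z₂ * (s * e) ≤ 1 / 2 * z₂ ^ 2 + Rz ^ 2 / 2 * e ^ 2 := by
    nlinarith [sq_nonneg (z₂ - s * e), mul_nonneg (sq_nonneg e) (sub_nonneg.mpr hs2)]
  have H1 := mul_le_mul_of_nonneg_left h1 hHpos.le
  have H2 := mul_le_mul_of_nonneg_left h2 hHpos.le
  have H3 := mul_le_mul_of_nonneg_left h3 hHpos.le
  -- coefficient slack bounds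
  have cA : (-4 * H + Rv ^ 2 / 2 + 1) ≤ 0 := by rw [hH]; nlinarith [sq_nonneg Rv]
  have A : (-4 * H + Rv ^ 2 / 2 + 1) * z₁ ^ 2 ≤ 0 := by
    nlinarith [mul_nonneg (neg_nonneg.2 cA) hz1]
  have cB : (-H + 5 / 4) ≤ 0 := by rw [hH]; nlinarith [sq_nonneg Rv]
  have B : (-H + 5 / 4) * z₁ ^ 4 ≤ 0 := by
    nlinarith [mul_nonneg (neg_nonneg.2 cB) hz14]
  have C : (49 / 4 * H - 13 * H) * e ^ 2 ≤ 0 := by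
    nlinarith [mul_nonneg hHpos.le he2]
  have key : (H * z₁ + H * z₁ ^ 3) * (c₁ * (z₁ - e)) +
      z₂ * (c₂ * z₂ + (z₁ + s) * (e + p) - s * p) =
      H * (c₁ * (z₁ ^ 2 + z₁ ^ 4)) + H * (-(c₁ * (z₁ * e))) + H * (-(c₁ * (z₁ ^ 3 * e))) +
      c₂ * z₂ ^ 2 + z₂ * (z₁ * e) + z₂ * (z₁ * p) + z₂ * (s * e) := by ring
  rw [key]
  nlinarith [H1, H2, H3, h4, h5, h6, h7, A, B, C]
end
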